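/- arXiv:1702.07443 — 6 statements merged into one kernel-verified Lean document; each statement's English description precedes it below -/
import Mathlib

section
/- If n, k, m ∈ ℤ³ each have nonzero third coordinate and there exist signs σ₁, σ₂ ∈ {±1} with σ₁·k₃/|k| + σ₂·m₃/|m| = n₃/|n|, and we write |n| = ν√d_n, |k| = κ√d_k, |m| = μ√d_m with ν, κ, μ positive integers and d_n, d_k, d_m squarefree positive integers, then d_n = d_k = d_m. -/
/-- Euclidean norm of an integer vector in ℤ³. -/
noncomputable def nrm (v : Fin 3 → ℤ) : ℝ :=
  Real.sqrt (((v 0 : ℝ)) ^ 2 + ((v 1 : ℝ)) ^ 2 + ((v 2 : ℝ)) ^ 2)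

/-!
Write each term of the relation as a rational multiple of a square root:
`k₃ / |k| = (k₃ / (κ d_k)) √d_k`, and similarly for `m` and `n`, so that
`a √d_k + b √d_m = c √d_n` with nonzero rationals `a, b, c`. Squaring shows that `√(d_k d_m)`
is rational, so `d_k d_m` is a perfect square and, both being squarefree, `d_k = d_m`. The
relation then collapses to `(a + b) √d_k = c √d_n`, so `√(d_n d_k)` is rational and `d_n = d_k`.
-/

theorem Nat.eq_of_squarefree_of_isSquare_mul {a b : ℕ} (ha : Squarefree a) (hb : Squarefree b)
    (h : IsSquare (a * b)) : a = b := by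
  obtain ⟨r, hr⟩ := h
  obtain ⟨s, rfl⟩ : a ∣ r :=
    (ha.dvd_pow_iff_dvd two_ne_zero).mp (by rw [sq, ← hr]; exact dvd_mul_right a b)
  have hb_eq : b = a * (s * s) :=
    Nat.eq_of_mul_eq_mul_left (Nat.pos_of_ne_zero ha.ne_zero) (by rw [hr]; ring)
  have hs : s = 1 := Nat.isUnit_iff.mp (hb s (by rw [hb_eq]; exact dvd_mul_left _ _))
  rw [hb_eq, hs, mul_one, mul_one]

theorem Nat.eq_of_squarefree_of_sqrt_mul_sqrt_eq_ratCast {a b : ℕ} (ha : Squarefree a)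
    (hb : Squarefree b) {q : ℚ} (h : √a * √b = q) : a = b := by
  refine Nat.eq_of_squarefree_of_isSquare_mul ha hb (not_not.mp fun hns => ?_)
  have hirr : Irrational √((a * b : ℕ) : ℝ) := irrational_sqrt_natCast_iff.mpr hns
  rw [Nat.cast_mul, Real.sqrt_mul (Nat.cast_nonneg a), h] at hirr
  exact hirr.ne_rat q rfl

theorem Nat.eq_of_squarefree_of_ratCast_mul_sqrt_eq {p r : ℕ} (hp : Squarefree p)
    (hr : Squarefree r) {a c : ℚ} (hc : c ≠ 0) (h : a * √p = c * √r) : r = p := by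
  refine Nat.eq_of_squarefree_of_sqrt_mul_sqrt_eq_ratCast hr hp (q := a / c * p) ?_
  have hc' : (c : ℝ) ≠ 0 := by exact_mod_cast hc
  have hsqrt_r : √r = a / c * √p := by field_simp; linarith
  push_cast
  rw [hsqrt_r, mul_assoc, Real.mul_self_sqrt (Nat.cast_nonneg p)]

theorem Nat.eq_and_eq_of_squarefree_of_ratCast_mul_sqrt_add_eq {p q r : ℕ} (hp : Squarefree p)
    (hq : Squarefree q) (hr : Squarefree r) {a b c : ℚ} (ha : a ≠ 0) (hb : b ≠ 0) (hc : c ≠ 0)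
    (h : a * √p + b * √q = c * √r) : r = p ∧ p = q := by
  have hab : (2 * a * b : ℝ) ≠ 0 := by positivity
  have hsq_p := Real.mul_self_sqrt (Nat.cast_nonneg (α := ℝ) p)
  have hsq_q := Real.mul_self_sqrt (Nat.cast_nonneg (α := ℝ) q)
  have hsq_r := Real.mul_self_sqrt (Nat.cast_nonneg (α := ℝ) r)
  -- squaring the relation isolates the cross term `2ab √p √q`
  have hpq : p = q := by
    refine Nat.eq_of_squarefree_of_sqrt_mul_sqrt_eq_ratCast hp hq
      (q := (c ^ 2 * r - a ^ 2 * p - b ^ 2 * q) / (2 * a * b)) ?_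
    push_cast
    rw [eq_div_iff hab]
    linear_combination (a * √p + b * √q + c * √r) * h + c ^ 2 * hsq_r - a ^ 2 * hsq_p
      - b ^ 2 * hsq_q
  subst hpq
  refine ⟨Nat.eq_of_squarefree_of_ratCast_mul_sqrt_eq hp hr hc (a := a + b) ?_, rfl⟩
  push_cast
  linear_combination h

theorem nrm_pos {v : Fin 3 → ℤ} (hv : v 2 ≠ 0) : 0 < nrm v := by
  have : (0 : ℝ) < (v 2 : ℝ) ^ 2 := by positivity
  exact Real.sqrt_pos.mpr (by positivity)

theorem exists_ratCast_ne_zero_of_eq_one_or_eq_neg_one {σ : ℝ} (h : σ = 1 ∨ σ = -1) :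
    ∃ ε : ℚ, ε ≠ 0 ∧ (ε : ℝ) = σ := by
  rcases h with rfl | rfl
  exacts [⟨1, one_ne_zero, Rat.cast_one⟩, ⟨-1, neg_ne_zero.mpr one_ne_zero, by simp⟩]

theorem exists_coord_two_div_nrm_eq_ratCast_mul_sqrt {v : Fin 3 → ℤ} (hv : v 2 ≠ 0) {ν d : ℕ}
    (hd : d ≠ 0) (h : nrm v = ν * √d) : ∃ q : ℚ, q ≠ 0 ∧ (v 2 : ℝ) / nrm v = q * √d := by
  have hν : ν ≠ 0 := by
    rintro rfl
    exact (nrm_pos hv).ne' (by rw [h, Nat.cast_zero, zero_mul])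
  refine ⟨v 2 / (ν * d), div_ne_zero (by exact_mod_cast hv) (by positivity), ?_⟩
  rw [h]
  push_cast
  field_simp
  rw [Real.sq_sqrt (Nat.cast_nonneg d)]

theorem squarefree_parts_equal_general (n k m : Fin 3 → ℤ)
    (hn3 : n 2 ≠ 0) (hk3 : k 2 ≠ 0) (hm3 : m 2 ≠ 0)
    (ν κ μ : ℕ) (dn dk dm : ℕ)
    (hdn : Squarefree dn) (hdk : Squarefree dk) (hdm : Squarefree dm)
    (hn : nrm n = (ν : ℝ) * Real.sqrt dn)
    (hk : nrm k = (κ : ℝ) * Real.sqrt dk)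
    (hm : nrm m = (μ : ℝ) * Real.sqrt dm)
    (hres : ∃ σ₁ σ₂ : ℝ, (σ₁ = 1 ∨ σ₁ = -1) ∧ (σ₂ = 1 ∨ σ₂ = -1) ∧
      σ₁ * (k 2 : ℝ) / nrm k + σ₂ * (m 2 : ℝ) / nrm m = (n 2 : ℝ) / nrm n) :
    dn = dk ∧ dk = dm := by
  obtain ⟨σ₁, σ₂, hσ₁, hσ₂, hrel⟩ := hres
  obtain ⟨ε₁, hε₁, rfl⟩ := exists_ratCast_ne_zero_of_eq_one_or_eq_neg_one hσ₁
  obtain ⟨ε₂, hε₂, rfl⟩ := exists_ratCast_ne_zero_of_eq_one_or_eq_neg_one hσ₂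
  obtain ⟨a, ha, hka⟩ := exists_coord_two_div_nrm_eq_ratCast_mul_sqrt hk3 hdk.ne_zero hk
  obtain ⟨b, hb, hmb⟩ := exists_coord_two_div_nrm_eq_ratCast_mul_sqrt hm3 hdm.ne_zero hm
  obtain ⟨c, hc, hnc⟩ := exists_coord_two_div_nrm_eq_ratCast_mul_sqrt hn3 hdn.ne_zero hn
  refine Nat.eq_and_eq_of_squarefree_of_ratCast_mul_sqrt_add_eq hdk hdm hdn
    (mul_ne_zero hε₁ ha) (mul_ne_zero hε₂ hb) hc ?_
  rw [mul_div_assoc, mul_div_assoc, hka, hmb, hnc] at hrel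
  push_cast
  linear_combination hrel

/-- If n, k, m ∈ ℤ³ have nonzero third coordinates and satisfy the resonance relation
σ₁·k₃/|k| + σ₂·m₃/|m| = n₃/|n| for some signs σ₁, σ₂ ∈ {±1}, and the norms are written
as |n| = ν√dₙ, |k| = κ√d_k, |m| = μ√d_m with positive integers ν, κ, μ and squarefree
positive integers dₙ, d_k, d_m, then dₙ = d_k = d_m. -/
theorem squarefree_parts_equal (n k m : Fin 3 → ℤ)
    (hn3 : n 2 ≠ 0) (hk3 : k 2 ≠ 0) (hm3 : m 2 ≠ 0)
    (ν κ μ : ℕ) (dn dk dm : ℕ)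
    (hν : 0 < ν) (hκ : 0 < κ) (hμ : 0 < μ)
    (hdn0 : 0 < dn) (hdk0 : 0 < dk) (hdm0 : 0 < dm)
    (hdn : Squarefree dn) (hdk : Squarefree dk) (hdm : Squarefree dm)
    (hn : nrm n = (ν : ℝ) * Real.sqrt dn)
    (hk : nrm k = (κ : ℝ) * Real.sqrt dk)
    (hm : nrm m = (μ : ℝ) * Real.sqrt dm)
    (hres : ∃ σ₁ σ₂ : ℝ, (σ₁ = 1 ∨ σ₁ = -1) ∧ (σ₂ = 1 ∨ σ₂ = -1) ∧
      σ₁ * (k 2 : ℝ) / nrm k + σ₂ * (m 2 : ℝ) / nrm m = (n 2 : ℝ) / nrm n) :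
    dn = dk ∧ dk = dm :=
  squarefree_parts_equal_general n k m hn3 hk3 hm3 ν κ μ dn dk dm hdn hdk hdm hn hk hm hres
end

section
/- For a, b, M ∈ ℝ with M > 0, consider the branch of the hyperbola (x−a)(y−b) = M with x > a. There is a constant C such that: if a chord of this branch has length λ and √M ≥ C·λ, then the area of the region between the chord and the hyperbola is at most C·λ³/√M. -/
/-!
Write `t = x₀ - a` and `δ = x₁ - x₀`. The vertical gap between the chord and the hyperbola
at `x` is `M (x - x₀)(x₁ - x) / (t (t + δ)(x - a)) ≤ M δ² / (4 t³)`, so the area is at most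
`M δ³ / (4 t³)`. The chord has length `λ ≥ δ` and `λ ≥ Δ = M δ / (t (t + δ))`, its vertical
extent, hence `M δ² = t (t + δ) δ Δ ≤ t (t + δ) λ²`. When `M ≥ 4λ²` this forces
`4δ² ≤ t (t + δ)`, so `δ ≤ t` and `√M δ ≤ 2 λ t`, and the area bound becomes
`(√M δ / t)³ / (4 √M) ≤ 2 λ³ / √M`.
-/

open MeasureTheory

/-- The point on the chord of the hyperbola (x−a)(y−b) = M over [x₀, x₁] at abscissa x. -/
noncomputable def chordY (a b M x₀ x₁ x : ℝ) : ℝ :=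
  (b + M / (x₀ - a)) + (x - x₀) * (((b + M / (x₁ - a)) - (b + M / (x₀ - a))) / (x₁ - x₀))

/-- The (Euclidean) length of the chord of the hyperbola (x−a)(y−b) = M joining the points
with abscissas x₀ and x₁. -/
noncomputable def chordLen (a b M x₀ x₁ : ℝ) : ℝ :=
  Real.sqrt ((x₁ - x₀) ^ 2 + (M / (x₁ - a) - M / (x₀ - a)) ^ 2)

/-- The region between a chord of the branch {x > a} of the hyperbola (x−a)(y−b) = M
and the hyperbola. -/
def chordRegion (a b M x₀ x₁ : ℝ) : Set (ℝ × ℝ) :=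
  {p : ℝ × ℝ | x₀ ≤ p.1 ∧ p.1 ≤ x₁ ∧ b + M / (p.1 - a) ≤ p.2 ∧ p.2 ≤ chordY a b M x₀ x₁ p.1}

open Set

theorem MeasureTheory.Measure.prod_apply_le_mul_of_section_le {α β : Type*}
    [MeasurableSpace α] [MeasurableSpace β] {μ : Measure α} {ν : Measure β}
    {s : Set (α × β)} {I : Set α} {K : ENNReal} (hs : MeasurableSet s) (hI : MeasurableSet I)
    (hsI : s ⊆ I ×ˢ univ) (hsec : ∀ x ∈ I, ν (Prod.mk x ⁻¹' s) ≤ K) :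
    μ.prod ν s ≤ K * μ I := by
  have hsec' : ∀ x, ν (Prod.mk x ⁻¹' s) ≤ I.indicator (fun _ => K) x := by
    intro x
    by_cases hx : x ∈ I
    · simpa [indicator_of_mem hx] using hsec x hx
    · have : Prod.mk x ⁻¹' s = ∅ :=
        eq_empty_of_forall_notMem fun y hy => hx (hsI hy).1
      simp [this]
  calc μ.prod ν s ≤ ∫⁻ x, ν (Prod.mk x ⁻¹' s) ∂μ := Measure.prod_apply_le hs
    _ ≤ ∫⁻ x, I.indicator (fun _ => K) x ∂μ := lintegral_mono hsec'
    _ = K * μ I := lintegral_indicator_const hI K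

section Hyperbola

variable {a b M x₀ x₁ x : ℝ}

theorem chordY_sub_hyperbola (hx : x ≠ a) (h₀ : x₀ ≠ a) (h₁ : x₁ ≠ a) (h01 : x₀ ≠ x₁) :
    chordY a b M x₀ x₁ x - (b + M / (x - a))
      = M * ((x - x₀) * (x₁ - x)) / ((x₀ - a) * (x₁ - a) * (x - a)) := by
  have : x - a ≠ 0 := sub_ne_zero.2 hx
  have : x₀ - a ≠ 0 := sub_ne_zero.2 h₀
  have : x₁ - a ≠ 0 := sub_ne_zero.2 h₁
  have : x₁ - x₀ ≠ 0 := sub_ne_zero.2 h01.symm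
  unfold chordY
  field_simp
  ring

theorem chordY_sub_hyperbola_le (hM : 0 ≤ M) (ha : a < x₀) (h01 : x₀ < x₁)
    (hx₀ : x₀ ≤ x) :
    chordY a b M x₀ x₁ x - (b + M / (x - a)) ≤ M * (x₁ - x₀) ^ 2 / (4 * (x₀ - a) ^ 3) := by
  have ht : 0 < x₀ - a := by linarith
  have ht₁ : 0 < x₁ - a := by linarith
  have htx : 0 < x - a := by linarith
  rw [chordY_sub_hyperbola (sub_pos.1 htx).ne' ha.ne' (sub_pos.1 ht₁).ne' h01.ne,
    div_le_div_iff₀ (by positivity) (by positivity)]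
  have hnum : 4 * ((x - x₀) * (x₁ - x)) ≤ (x₁ - x₀) ^ 2 := by
    nlinarith [sq_nonneg (x - x₀ - (x₁ - x))]
  have hden : (x₀ - a) ^ 3 ≤ (x₀ - a) * (x₁ - a) * (x - a) := by
    rw [pow_three, ← mul_assoc]
    gcongr
  have := mul_le_mul hnum hden (by positivity) (by positivity)
  nlinarith

theorem measurableSet_chordRegion : MeasurableSet (chordRegion a b M x₀ x₁) := by
  unfold chordRegion chordY
  simp only [ofPred_and]
  refine (measurableSet_le ?_ ?_).inter ((measurableSet_le ?_ ?_).inter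
    ((measurableSet_le ?_ ?_).inter (measurableSet_le ?_ ?_))) <;> fun_prop

theorem volume_chordRegion_le (hM : 0 ≤ M) (ha : a < x₀) (h01 : x₀ < x₁) :
    volume (chordRegion a b M x₀ x₁) ≤ ENNReal.ofReal (M * (x₁ - x₀) ^ 3 / (4 * (x₀ - a) ^ 3)) := by
  have ht : 0 < x₀ - a := by linarith
  rw [show M * (x₁ - x₀) ^ 3 / (4 * (x₀ - a) ^ 3)
      = M * (x₁ - x₀) ^ 2 / (4 * (x₀ - a) ^ 3) * (x₁ - x₀) by ring,
    ENNReal.ofReal_mul (by positivity), ← Real.volume_Icc, Measure.volume_eq_prod]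
  refine Measure.prod_apply_le_mul_of_section_le measurableSet_chordRegion measurableSet_Icc
    (fun p hp => ⟨⟨hp.1, hp.2.1⟩, mem_univ _⟩) fun x hx => ?_
  calc volume (Prod.mk x ⁻¹' chordRegion a b M x₀ x₁)
      ≤ volume (Icc (b + M / (x - a)) (chordY a b M x₀ x₁ x)) :=
        measure_mono fun y hy => ⟨hy.2.2.1, hy.2.2.2⟩
    _ ≤ _ := by
        rw [Real.volume_Icc]
        exact ENNReal.ofReal_le_ofReal (chordY_sub_hyperbola_le hM ha h01 hx.1)

theorem abs_sub_le_chordLen : |x₁ - x₀| ≤ chordLen a b M x₀ x₁ :=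
  Real.abs_le_sqrt (le_add_of_nonneg_right (sq_nonneg _))

theorem abs_sub_div_le_chordLen : |M / (x₁ - a) - M / (x₀ - a)| ≤ chordLen a b M x₀ x₁ :=
  Real.abs_le_sqrt (le_add_of_nonneg_left (sq_nonneg _))

theorem mul_sq_sub_le_chordLen_sq (hM : 0 ≤ M) (ha : a < x₀) (h01 : x₀ < x₁) :
    M * (x₁ - x₀) ^ 2 ≤ (x₀ - a) * (x₁ - a) * chordLen a b M x₀ x₁ ^ 2 := by
  have ht : 0 < x₀ - a := by linarith
  have ht₁ : 0 < x₁ - a := by linarith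
  have hvert : M / (x₀ - a) - M / (x₁ - a) = M * (x₁ - x₀) / ((x₀ - a) * (x₁ - a)) := by
    field_simp
    ring
  have hδ : x₁ - x₀ ≤ chordLen a b M x₀ x₁ :=
    (le_abs_self _).trans abs_sub_le_chordLen
  have hΔ : M / (x₀ - a) - M / (x₁ - a) ≤ chordLen a b M x₀ x₁ :=
    (neg_le_abs _).trans_eq' (by ring) |>.trans abs_sub_div_le_chordLen
  rw [hvert, div_le_iff₀ (by positivity)] at hΔ
  nlinarith [mul_le_mul hδ hΔ (by positivity) (by linarith)]

theorem sqrt_mul_sub_le_two_mul_chordLen_mul (hM : 0 < M) (ha : a < x₀) (h01 : x₀ < x₁)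
    (hsmall : 2 * chordLen a b M x₀ x₁ ≤ √M) :
    √M * (x₁ - x₀) ≤ 2 * chordLen a b M x₀ x₁ * (x₀ - a) := by
  have hchord := mul_sq_sub_le_chordLen_sq (b := b) hM.le ha h01
  set L := chordLen a b M x₀ x₁
  have ht : 0 < x₀ - a := by linarith
  have hM' : √M ^ 2 = M := Real.sq_sqrt hM.le
  have hL : 0 ≤ L := Real.sqrt_nonneg _
  have h4L : 4 * L ^ 2 ≤ M := by nlinarith
  have hnear : x₁ - x₀ ≤ x₀ - a := by
    have : M * (4 * (x₁ - x₀) ^ 2) ≤ M * ((x₀ - a) * (x₁ - a)) := by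
      nlinarith [mul_le_mul_of_nonneg_left h4L (by nlinarith : 0 ≤ (x₀ - a) * (x₁ - a))]
    nlinarith [le_of_mul_le_mul_left this hM]
  have hsq : (√M * (x₁ - x₀)) ^ 2 ≤ (2 * L * (x₀ - a)) ^ 2 := by
    nlinarith [mul_le_mul_of_nonneg_right hnear (mul_nonneg ht.le (sq_nonneg L))]
  have hlhs : 0 ≤ √M * (x₁ - x₀) := mul_nonneg (Real.sqrt_nonneg M) (sub_nonneg.2 h01.le)
  exact (pow_le_pow_iff_left₀ hlhs (by positivity) two_ne_zero).1 hsq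

end Hyperbola

/-- Area between a hyperbola branch and a chord of length λ: there is a constant C such
that whenever √M ≥ C·λ, the area is at most C·λ³/√M. -/
theorem hyperbola_chord_area_bound :
    ∃ C : ℝ, 0 < C ∧ ∀ a b M x₀ x₁ : ℝ, 0 < M → a < x₀ → x₀ < x₁ →
      Real.sqrt M ≥ C * chordLen a b M x₀ x₁ →
      (volume (chordRegion a b M x₀ x₁)).toReal
        ≤ C * (chordLen a b M x₀ x₁) ^ 3 / Real.sqrt M := by
  refine ⟨2, two_pos, fun a b M x₀ x₁ hM ha h01 hsmall => ?_⟩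
  set L := chordLen a b M x₀ x₁
  have ht : 0 < x₀ - a := by linarith
  have hM' : √M ^ 2 = M := Real.sq_sqrt hM.le
  calc (volume (chordRegion a b M x₀ x₁)).toReal
      ≤ M * (x₁ - x₀) ^ 3 / (4 * (x₀ - a) ^ 3) :=
        ENNReal.toReal_le_of_le_ofReal (by positivity) (volume_chordRegion_le hM.le ha h01)
    _ = (√M * (x₁ - x₀)) ^ 3 / (4 * (x₀ - a) ^ 3 * √M) := by
        rw [mul_pow, pow_succ √M 2, hM']
        field_simp
    _ ≤ (2 * L * (x₀ - a)) ^ 3 / (4 * (x₀ - a) ^ 3 * √M) := by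
        gcongr ?_ ^ 3 / _
        exact sqrt_mul_sub_le_two_mul_chordLen_mul hM ha h01 hsmall
    _ = 2 * L ^ 3 / √M := by
        field_simp
        ring
end

section
/- Let σ ∈ {±1}, and let n, k ∈ ℤ³ \ {0} with n₃ = 0, k₃ ≠ 0 and |k| = |n−k|. Then e^σ(k)·(n−k) · e^σ(n−k) + e^σ(n−k)·k · e^σ(k) = (e^σ(k)·e^σ(n−k))·n, where e^σ denotes the helical eigenvector satisfying m × e^σ(m) = σ i |m| e^σ(m). -/
def cross3 (u v : Fin 3 → ℂ) : Fin 3 → ℂ :=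
  ![u 1 * v 2 - u 2 * v 1, u 2 * v 0 - u 0 * v 2, u 0 * v 1 - u 1 * v 0]

/-- Bilinear dot product a·b = Σ aⱼ bⱼ on ℂ³. -/
noncomputable def dotc (u v : Fin 3 → ℂ) : ℂ := ∑ i, u i * v i

def intC (v : Fin 3 → ℤ) : Fin 3 → ℂ := fun i => (v i : ℂ)

open Matrix

theorem cross3_eq_crossProduct (u v : Fin 3 → ℂ) : cross3 u v = u ⨯₃ v := rfl

theorem dotc_eq_dotProduct (u v : Fin 3 → ℂ) : dotc u v = u ⬝ᵥ v := rfl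

theorem intC_add (v w : Fin 3 → ℤ) : intC (v + w) = intC v + intC w := by
  ext i
  simp [intC]

theorem dotProduct_smul_add_dotProduct_smul_of_cross_eq_smul {R : Type*} [CommRing R]
    {u v a b : Fin 3 → R} {c : R} (ha : u ⨯₃ a = c • a) (hb : v ⨯₃ b = c • b) :
    (a ⬝ᵥ v) • b + (b ⬝ᵥ u) • a = (a ⬝ᵥ b) • (u + v) := by
  have hab : a ⨯₃ (v ⨯₃ b) = c • a ⨯₃ b := by rw [hb, map_smul]
  have hba : b ⨯₃ (u ⨯₃ a) = -(c • a ⨯₃ b) := by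
    rw [ha, map_smul, ← cross_anticomm, smul_neg]
  rw [cross_cross_eq_smul_sub_smul', dotProduct_comm v a] at hab
  rw [cross_cross_eq_smul_sub_smul', dotProduct_comm b a, dotProduct_comm u b] at hba
  linear_combination (norm := module) -hab - hba

theorem resonant_cancellation_general (σ : ℝ)
    (n k : Fin 3 → ℤ) (hnorm : nrm k = nrm (n - k))
    (ek em : Fin 3 → ℂ)
    (hek : cross3 (intC k) ek = ((σ : ℂ) * Complex.I * ((nrm k : ℝ) : ℂ)) • ek)
    (hem : cross3 (intC (n - k)) em
      = ((σ : ℂ) * Complex.I * ((nrm (n - k) : ℝ) : ℂ)) • em) :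
    (dotc ek (intC (n - k))) • em + (dotc em (intC k)) • ek
      = (dotc ek em) • intC n := by
  rw [← hnorm, cross3_eq_crossProduct] at hem
  rw [cross3_eq_crossProduct] at hek
  have hsum : intC k + intC (n - k) = intC n := by rw [← intC_add, add_sub_cancel]
  simp only [dotc_eq_dotProduct, ← hsum]
  exact dotProduct_smul_add_dotProduct_smul_of_cross_eq_smul hek hem

/-- Cancellation identity behind the vanishing of the vertical average of the resonant
nonlinearity: if n₃ = 0, k₃ ≠ 0, |k| = |n−k| and e_k, e_m are helical eigenvectors of k
and n−k (for the same sign σ), then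
(e_k·(n−k)) e_m + (e_m·k) e_k = (e_k·e_m) n. -/
theorem resonant_cancellation (σ : ℝ) (hσ : σ = 1 ∨ σ = -1)
    (n k : Fin 3 → ℤ) (hn : n ≠ 0) (hk : k ≠ 0)
    (hn3 : n 2 = 0) (hk3 : k 2 ≠ 0) (hnorm : nrm k = nrm (n - k))
    (ek em : Fin 3 → ℂ)
    (hek : cross3 (intC k) ek = ((σ : ℂ) * Complex.I * ((nrm k : ℝ) : ℂ)) • ek)
    (hem : cross3 (intC (n - k)) em
      = ((σ : ℂ) * Complex.I * ((nrm (n - k) : ℝ) : ℂ)) • em) :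
    (dotc ek (intC (n - k))) • em + (dotc em (intC k)) • ek
      = (dotc ek em) • intC n :=
  resonant_cancellation_general σ n k hnorm ek em hek hem
end

section
/- Let d ≥ 1 and α ≤ β ≤ γ with α + β < 0. Then the product estimate ‖fg‖_{H^{-γ}(𝕋^d)} ≤ C‖f‖_{H^α}‖g‖_{H^β} fails: there is no constant C making it hold for all mean-zero f, g. (A counterexample is given by f̂ = χ_{{Ne₁}}, ĝ = χ_{{(−N−1)e₁}} with N → ∞.) -/
/-- Sobolev weight (1 + |n|²) of a frequency n ∈ ℤ^d. -/
noncomputable def wt (d : ℕ) (n : Fin d → ℤ) : ℝ := 1 + ∑ i, ((n i : ℝ)) ^ 2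

/-- The H^s norm of a function on 𝕋^d via its Fourier coefficients. -/
noncomputable def sobNorm (d : ℕ) (s : ℝ) (a : (Fin d → ℤ) → ℂ) : ℝ :=
  Real.sqrt (∑' n : Fin d → ℤ, wt d n ^ s * ‖a n‖ ^ 2)

/-- Convolution of Fourier coefficients (Fourier coefficients of the product fg). -/
noncomputable def conv (d : ℕ) (a b : (Fin d → ℤ) → ℂ) : (Fin d → ℤ) → ℂ :=
  fun n => ∑' k : Fin d → ℤ, a k * b (n - k)

/-!
Test the estimate on single Fourier modes `f̂ = δ_{N e₁}` and `ĝ = δ_{-(N+1) e₁}`. Their product is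
the single mode `-e₁`, whose `H^{-γ}` norm does not depend on `N`, while the weights `1 + N²` and
`1 + (N + 1)²` are comparable, so `‖f‖_{H^α} ‖g‖_{H^β} ≈ N^{α + β} → 0`.
-/

open Filter Topology

lemma Real.rpow_le_rpow_mul_of_le_of_le {x y c : ℝ} (s : ℝ) (hx : 0 < x) (hxy : x ≤ y)
    (hyc : y ≤ c * x) : y ^ s ≤ c ^ |s| * x ^ s := by
  have hc : 1 ≤ c := le_of_mul_le_mul_right (by linarith) hx
  rcases le_or_gt 0 s with hs | hs
  · calc y ^ s ≤ (c * x) ^ s := Real.rpow_le_rpow (by linarith) hyc hs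
      _ = c ^ |s| * x ^ s := by rw [abs_of_nonneg hs, Real.mul_rpow (by linarith) hx.le]
  · calc y ^ s ≤ x ^ s := Real.rpow_le_rpow_of_nonpos hx hxy hs.le
      _ ≤ c ^ |s| * x ^ s :=
        le_mul_of_one_le_left (by positivity) (Real.one_le_rpow hc (abs_nonneg s))

lemma tendsto_one_add_sq_rpow_mul_rpow {α β : ℝ} (hneg : α + β < 0) :
    Tendsto (fun x : ℝ => (1 + x ^ 2) ^ α * (1 + (x + 1) ^ 2) ^ β) atTop (𝓝 0) := by
  have hweight : Tendsto (fun x : ℝ => 1 + x ^ 2) atTop atTop :=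
    tendsto_atTop_add_const_left _ 1 (tendsto_pow_atTop two_ne_zero)
  have hdecay : Tendsto (fun x : ℝ => 3 ^ |β| * (1 + x ^ 2) ^ (α + β)) atTop (𝓝 0) := by
    simpa using ((tendsto_rpow_neg_atTop (neg_pos.2 hneg)).comp hweight).const_mul (3 ^ |β|)
  refine tendsto_of_tendsto_of_tendsto_of_le_of_le' tendsto_const_nhds hdecay
    (Eventually.of_forall fun x => by positivity) ?_
  filter_upwards [eventually_ge_atTop 0] with x hx
  have hpos : 0 < 1 + x ^ 2 := by positivity
  calc (1 + x ^ 2) ^ α * (1 + (x + 1) ^ 2) ^ β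
      ≤ (1 + x ^ 2) ^ α * (3 ^ |β| * (1 + x ^ 2) ^ β) := by
        gcongr
        exact Real.rpow_le_rpow_mul_of_le_of_le β hpos (by nlinarith) (by nlinarith)
    _ = 3 ^ |β| * (1 + x ^ 2) ^ (α + β) := by rw [Real.rpow_add hpos]; ring

section Fourier

variable {d : ℕ}

lemma wt_pos (n : Fin d → ℤ) : 0 < wt d n := by
  unfold wt; positivity

lemma wt_single (i : Fin d) (m : ℤ) : wt d (Pi.single i m) = 1 + (m : ℝ) ^ 2 := by
  rw [wt, Finset.sum_eq_single i (fun j _ hj => by simp [hj]) (by simp)]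
  simp

lemma sobNorm_single (s : ℝ) (p : Fin d → ℤ) (z : ℂ) :
    sobNorm d s (Pi.single p z) = ‖z‖ * wt d p ^ (s / 2) := by
  rw [sobNorm, tsum_eq_single p (fun n hn => by simp [hn]), Pi.single_eq_same,
    Real.sqrt_mul (Real.rpow_nonneg (wt_pos p).le s), Real.sqrt_sq (norm_nonneg z),
    Real.sqrt_eq_rpow, ← Real.rpow_mul (wt_pos p).le, mul_comm]
  ring_nf

lemma single_single_apply_zero {i : Fin d} {m : ℤ} (hm : m ≠ 0) (z : ℂ) :
    (Pi.single (Pi.single i m) z : (Fin d → ℤ) → ℂ) 0 = 0 := by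
  refine Pi.single_eq_of_ne (M := fun _ => ℂ) (fun h => hm ?_) z
  simpa using (congrFun h i).symm

lemma conv_single_left (p : Fin d → ℤ) (z : ℂ) (b : (Fin d → ℤ) → ℂ) :
    conv d (Pi.single p z) b = fun n => z * b (n - p) := by
  funext n
  rw [conv, tsum_eq_single p (fun k hk => by simp [hk]), Pi.single_eq_same]

lemma conv_single_single (p q : Fin d → ℤ) (z w : ℂ) :
    conv d (Pi.single p z) (Pi.single q w) = Pi.single (p + q) (z * w) := by
  rw [conv_single_left]
  funext n
  simp only [Pi.single_apply, sub_eq_iff_eq_add, add_comm q p]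
  split_ifs <;> simp

end Fourier

theorem product_estimate_fails_general (d : ℕ) (hd : 1 ≤ d) (α β γ : ℝ)
    (hneg : α + β < 0) :
    ¬ ∃ C : ℝ, ∀ a b : (Fin d → ℤ) → ℂ,
      (Function.support a).Finite → (Function.support b).Finite →
      a 0 = 0 → b 0 = 0 →
      sobNorm d (-γ) (conv d a b) ≤ C * sobNorm d α a * sobNorm d β b := by
  rintro ⟨C, hC⟩
  set e : Fin d := ⟨0, hd⟩
  have hbound : ∀ N : ℕ, 1 ≤ N → 2 ^ (-γ / 2) ≤
      C * ((1 + (N : ℝ) ^ 2) ^ (α / 2) * (1 + ((N : ℝ) + 1) ^ 2) ^ (β / 2)) := by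
    intro N hN
    have h := hC (Pi.single (Pi.single e (N : ℤ)) 1) (Pi.single (Pi.single e (-(N + 1 : ℤ))) 1)
      ((Set.finite_singleton _).subset Pi.support_single_subset)
      ((Set.finite_singleton _).subset Pi.support_single_subset)
      (single_single_apply_zero (by omega) 1) (single_single_apply_zero (by omega) 1)
    rw [conv_single_single, ← Pi.single_add, sobNorm_single, sobNorm_single, sobNorm_single,
      wt_single, wt_single, wt_single] at h
    norm_num at h
    rwa [mul_assoc, show (-1 + -(N : ℝ)) ^ 2 = ((N : ℝ) + 1) ^ 2 by ring] at h
  have hlim := ((tendsto_one_add_sq_rpow_mul_rpow (α := α / 2) (β := β / 2) (by linarith)).comp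
    tendsto_natCast_atTop_atTop).const_mul C
  rw [mul_zero] at hlim
  have hpos : (0 : ℝ) < 2 ^ (-γ / 2) := by positivity
  obtain ⟨N, hN, hlt⟩ := ((eventually_ge_atTop 1).and (hlim.eventually_lt_const hpos)).exists
  exact (hbound N hN).not_gt hlt

/-- Failure of the product estimate ‖fg‖_{H^{-γ}} ≤ C‖f‖_{H^α}‖g‖_{H^β} on 𝕋^d when
α ≤ β ≤ γ and α + β < 0: no constant C works, even for finitely supported mean-zero
Fourier coefficients. -/
theorem product_estimate_fails (d : ℕ) (hd : 1 ≤ d) (α β γ : ℝ)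
    (hab : α ≤ β) (hbc : β ≤ γ) (hneg : α + β < 0) :
    ¬ ∃ C : ℝ, ∀ a b : (Fin d → ℤ) → ℂ,
      (Function.support a).Finite → (Function.support b).Finite →
      a 0 = 0 → b 0 = 0 →
      sobNorm d (-γ) (conv d a b) ≤ C * sobNorm d α a * sobNorm d β b :=
  product_estimate_fails_general d hd α β γ hneg
end

section
/- For every n ∈ ℤ³ with n₃ ≠ 0 and every fixed (k₁, k₂) ∈ ℤ², there are at most 8 values of k₃ ∈ ℤ such that the triple (k, n−k) satisfies the resonance relation σ₁·k₃/|k| + σ₂·(n₃−k₃)/|n−k| = σ₃·n₃/|n| for some σ ∈ {±1}³ (with k₃ ≠ 0 ≠ n₃ − k₃). Consequently, for each n with n₃ ≠ 0 the number of resonant pairs (k, n−k) with |k| ≤ L is O(L²). -/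
/-- The resonance relation for the pair (k, n − k):
σ₁·k₃/|k| + σ₂·(n₃−k₃)/|n−k| = σ₃·n₃/|n| for some σ ∈ {±1}³. -/
noncomputable def Res (n k : Fin 3 → ℤ) : Prop :=
  ∃ σ₁ σ₂ σ₃ : ℝ, (σ₁ = 1 ∨ σ₁ = -1) ∧ (σ₂ = 1 ∨ σ₂ = -1) ∧ (σ₃ = 1 ∨ σ₃ = -1) ∧
    σ₁ * (k 2 : ℝ) / nrm k + σ₂ * ((n 2 - k 2 : ℤ) : ℝ) / nrm (n - k)
      = σ₃ * (n 2 : ℝ) / nrm n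

/-!
Writing `x = σ₁k₃/|k|`, `y = σ₂m₃/|m|`, `z = σ₃n₃/|n|` with `m = n - k`, resonance says
`x + y = z`, hence `(z² - x² - y²)² = 4x²y²`; multiplying by `(|k|²|m|²|n|²)²` removes all square
roots and signs. For fixed `(k₁, k₂)` this is a polynomial equation in `k₃` of degree exactly 8
(leading coefficient `-n₃²(4|n|² - n₃²)`), so at most 8 values of `k₃` are resonant. Counting
over the `O(L²)` choices of `(k₁, k₂)` in the ball of radius `L` gives the second bound.
-/

open Polynomial

def nrmSq (v : Fin 3 → ℤ) : ℤ := v 0 ^ 2 + v 1 ^ 2 + v 2 ^ 2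

theorem nrm_eq_sqrt_nrmSq (v : Fin 3 → ℤ) : nrm v = √(nrmSq v : ℝ) := by
  simp [nrm, nrmSq]

theorem sq_le_nrmSq (v : Fin 3 → ℤ) (i : Fin 3) : v i ^ 2 ≤ nrmSq v := by
  fin_cases i <;> simp [nrmSq] <;>
    linarith [sq_nonneg (v 0), sq_nonneg (v 1), sq_nonneg (v 2)]

theorem abs_le_nrm (v : Fin 3 → ℤ) (i : Fin 3) : |(v i : ℝ)| ≤ nrm v := by
  rw [nrm_eq_sqrt_nrmSq]
  exact Real.abs_le_sqrt (by exact_mod_cast sq_le_nrmSq v i)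

theorem sq_sign_mul_div_nrm_mul_nrmSq {σ : ℝ} (hσ : σ = 1 ∨ σ = -1) (v : Fin 3 → ℤ)
    (i : Fin 3) : (σ * v i / nrm v) ^ 2 * nrmSq v = (v i : ℝ) ^ 2 := by
  have hσ2 : σ ^ 2 = 1 := by rcases hσ with rfl | rfl <;> norm_num
  rcases (show (0 : ℤ) ≤ nrmSq v by unfold nrmSq; positivity).eq_or_lt with h0 | hpos
  · have hvi : v i = 0 := pow_eq_zero_iff two_ne_zero |>.mp
      (le_antisymm (h0 ▸ sq_le_nrmSq v i) (sq_nonneg _))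
    simp [hvi, ← h0]
  · have hpos' : (0 : ℝ) < nrmSq v := by exact_mod_cast hpos
    rw [div_pow, mul_pow, hσ2, nrm_eq_sqrt_nrmSq, Real.sq_sqrt hpos'.le]
    field_simp

/-- Squaring `a/√K + b/√M = c/√N` twice to clear the roots (and signs) gives
`resonanceExpr a b c K M N = 0`. -/
def resonanceExpr {R : Type*} [CommRing R] (a b c K M N : R) : R :=
  (a ^ 2 * M * N + b ^ 2 * K * N - c ^ 2 * K * M) ^ 2 - 4 * a ^ 2 * b ^ 2 * K * M * N ^ 2

theorem resonanceExpr_eq_zero_of_add_eq {R : Type*} [CommRing R] {x y z a b c K M N : R}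
    (hxyz : x + y = z) (hx : x ^ 2 * K = a ^ 2) (hy : y ^ 2 * M = b ^ 2)
    (hz : z ^ 2 * N = c ^ 2) : resonanceExpr a b c K M N = 0 := by
  have key : (z ^ 2 - x ^ 2 - y ^ 2) ^ 2 - 4 * (x * y) ^ 2 = 0 := by rw [← hxyz]; ring
  rw [resonanceExpr, ← hx, ← hy, ← hz]
  linear_combination (K * M * N) ^ 2 * key

theorem Res.resonanceExpr_eq_zero {n k : Fin 3 → ℤ} (h : Res n k) :
    resonanceExpr (k 2) (n 2 - k 2) (n 2) (nrmSq k) (nrmSq (n - k)) (nrmSq n) = 0 := by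
  obtain ⟨σ₁, σ₂, σ₃, h₁, h₂, h₃, hsum⟩ := h
  have hreal := resonanceExpr_eq_zero_of_add_eq hsum (sq_sign_mul_div_nrm_mul_nrmSq h₁ k 2)
    (sq_sign_mul_div_nrm_mul_nrmSq h₂ (n - k) 2) (sq_sign_mul_div_nrm_mul_nrmSq h₃ n 2)
  simp only [resonanceExpr, Pi.sub_apply] at hreal ⊢
  exact_mod_cast hreal

noncomputable def resonancePoly (n : Fin 3 → ℤ) (k₁ k₂ : ℤ) : ℤ[X] :=
  resonanceExpr X (C (n 2) - X) (C (n 2)) (C (k₁ ^ 2 + k₂ ^ 2) + X ^ 2)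
    (C ((n 0 - k₁) ^ 2 + (n 1 - k₂) ^ 2) + (C (n 2) - X) ^ 2) (C (nrmSq n))

theorem eval_resonancePoly (n : Fin 3 → ℤ) (k₁ k₂ k₃ : ℤ) :
    (resonancePoly n k₁ k₂).eval k₃ = resonanceExpr k₃ (n 2 - k₃) (n 2)
      (nrmSq ![k₁, k₂, k₃]) (nrmSq (n - ![k₁, k₂, k₃])) (nrmSq n) := by
  simp [resonancePoly, resonanceExpr, nrmSq]

theorem natDegree_resonancePoly {n : Fin 3 → ℤ} (hn : n 2 ≠ 0) (k₁ k₂ : ℤ) :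
    (resonancePoly n k₁ k₂).natDegree = 8 := by
  unfold resonancePoly resonanceExpr
  compute_degree!
  have hn₃ : 0 < n 2 ^ 2 := by positivity
  have hN := sq_le_nrmSq n 2
  nlinarith

theorem setOf_res_subset_roots {n : Fin 3 → ℤ} (hn : n 2 ≠ 0) (k₁ k₂ : ℤ) :
    {k₃ : ℤ | Res n ![k₁, k₂, k₃]} ⊆ (resonancePoly n k₁ k₂).roots.toFinset := by
  intro k₃ hres
  have hne : resonancePoly n k₁ k₂ ≠ 0 := by
    intro h
    simpa [h] using natDegree_resonancePoly hn k₁ k₂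
  rw [Finset.mem_coe, Multiset.mem_toFinset, mem_roots hne, IsRoot, eval_resonancePoly]
  simpa using hres.resonanceExpr_eq_zero

theorem ncard_setOf_res_le {n : Fin 3 → ℤ} (hn : n 2 ≠ 0) (k₁ k₂ : ℤ) :
    {k₃ : ℤ | Res n ![k₁, k₂, k₃]}.ncard ≤ 8 :=
  calc {k₃ : ℤ | Res n ![k₁, k₂, k₃]}.ncard
      ≤ (resonancePoly n k₁ k₂).roots.toFinset.card := by
        simpa using Set.ncard_le_ncard (setOf_res_subset_roots hn k₁ k₂)
    _ ≤ Multiset.card (resonancePoly n k₁ k₂).roots := Multiset.toFinset_card_le _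
    _ ≤ (resonancePoly n k₁ k₂).natDegree := card_roots' _
    _ = 8 := natDegree_resonancePoly hn k₁ k₂

theorem finite_setOf_res {n : Fin 3 → ℤ} (hn : n 2 ≠ 0) (k₁ k₂ : ℤ) :
    {k₃ : ℤ | Res n ![k₁, k₂, k₃]}.Finite :=
  (Finset.finite_toSet _).subset (setOf_res_subset_roots hn k₁ k₂)

theorem ncard_le_mul_card_of_mapsTo {α β : Type*} {S : Set α} {f : α → β} {t : Finset β}
    (hS : S.Finite) (hf : ∀ a ∈ S, f a ∈ t) {m : ℕ}
    (hm : ∀ b ∈ t, {a ∈ S | f a = b}.ncard ≤ m) : S.ncard ≤ m * t.card := by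
  classical
  rw [Set.ncard_eq_toFinset_card S hS]
  refine Finset.card_le_mul_card_image_of_maps_to (by simpa using hf) m fun b hb => ?_
  simpa [← Set.ncard_coe_finset, Finset.coe_filter] using hm b hb

theorem mem_Icc_floor_of_nrm_le {k : Fin 3 → ℤ} {L : ℝ} (h : nrm k ≤ L) (i : Fin 3) :
    k i ∈ Finset.Icc (-⌊L⌋) ⌊L⌋ := by
  have hk : |k i| ≤ ⌊L⌋ := Int.le_floor.mpr (by exact_mod_cast (abs_le_nrm k i).trans h)
  exact Finset.mem_Icc.mpr (abs_le.mp hk)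

theorem finite_setOf_nrm_le (L : ℝ) : {k : Fin 3 → ℤ | nrm k ≤ L}.Finite :=
  (Set.finite_Icc (fun _ => -⌊L⌋) fun _ => ⌊L⌋).subset fun _ hk =>
    ⟨fun i => (Finset.mem_Icc.mp (mem_Icc_floor_of_nrm_le hk i)).1,
      fun i => (Finset.mem_Icc.mp (mem_Icc_floor_of_nrm_le hk i)).2⟩

theorem card_Icc_neg_floor_le {L : ℝ} (hL : 1 ≤ L) :
    ((Finset.Icc (-⌊L⌋) ⌊L⌋).card : ℝ) ≤ 3 * L := by
  have hfloor : (0 : ℤ) ≤ ⌊L⌋ := Int.floor_nonneg.mpr (by linarith)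
  have hcard : ((Finset.Icc (-⌊L⌋) ⌊L⌋).card : ℤ) = 2 * ⌊L⌋ + 1 := by
    rw [Int.card_Icc_of_le _ _ (by linarith)]; ring
  have hcard' : ((Finset.Icc (-⌊L⌋) ⌊L⌋).card : ℝ) = 2 * ⌊L⌋ + 1 := by exact_mod_cast hcard
  linarith [Int.floor_le L]

theorem ncard_setOf_nrm_le_res_le {n : Fin 3 → ℤ} (hn : n 2 ≠ 0) (L : ℝ) :
    {k : Fin 3 → ℤ | nrm k ≤ L ∧ Res n k}.ncard ≤ 8 * (Finset.Icc (-⌊L⌋) ⌊L⌋).card ^ 2 := by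
  rw [sq, ← Finset.card_product]
  refine ncard_le_mul_card_of_mapsTo ((finite_setOf_nrm_le L).subset fun _ hk => hk.1)
    (f := fun k => (k 0, k 1)) (fun k hk => Finset.mem_product.mpr
      ⟨mem_Icc_floor_of_nrm_le hk.1 0, mem_Icc_floor_of_nrm_le hk.1 1⟩) ?_
  rintro ⟨k₁, k₂⟩ -
  have hfiber : {k ∈ {k : Fin 3 → ℤ | nrm k ≤ L ∧ Res n k} | (k 0, k 1) = (k₁, k₂)} ⊆
      (fun k₃ => ![k₁, k₂, k₃]) '' {k₃ : ℤ | Res n ![k₁, k₂, k₃]} := by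
    rintro k ⟨⟨-, hres⟩, hproj⟩
    obtain ⟨rfl, rfl⟩ := Prod.mk.inj hproj
    have hk : ![k 0, k 1, k 2] = k := by ext i; fin_cases i <;> rfl
    exact ⟨k 2, by rwa [Set.mem_ofPred_eq, hk], hk⟩
  calc _ ≤ _ := Set.ncard_le_ncard hfiber ((finite_setOf_res hn k₁ k₂).image _)
    _ ≤ _ := Set.ncard_image_le (finite_setOf_res hn k₁ k₂)
    _ ≤ 8 := ncard_setOf_res_le hn k₁ k₂

/-- For n₃ ≠ 0 and fixed (k₁, k₂), at most 8 values of k₃ give a resonant pair; hence for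
each such n the number of resonant pairs (k, n−k) with |k| ≤ L is O(L²). -/
theorem resonant_fiber_bound :
    (∀ n : Fin 3 → ℤ, n 2 ≠ 0 → ∀ k₁ k₂ : ℤ,
      Set.ncard {k₃ : ℤ | k₃ ≠ 0 ∧ n 2 - k₃ ≠ 0 ∧ Res n ![k₁, k₂, k₃]} ≤ 8) ∧
    ∃ C : ℝ, 0 < C ∧ ∀ L : ℝ, 1 ≤ L → ∀ n : Fin 3 → ℤ, n 2 ≠ 0 →
      ((Set.ncard {k : Fin 3 → ℤ |
          k 2 ≠ 0 ∧ n 2 - k 2 ≠ 0 ∧ nrm k ≤ L ∧ Res n k}) : ℝ) ≤ C * L ^ 2 := by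
  refine ⟨fun n hn k₁ k₂ => ?_, 72, by norm_num, fun L hL n hn => ?_⟩
  · exact (Set.ncard_le_ncard (fun _ hk => hk.2.2) (finite_setOf_res hn k₁ k₂)).trans
      (ncard_setOf_res_le hn k₁ k₂)
  · have hsub : {k : Fin 3 → ℤ | k 2 ≠ 0 ∧ n 2 - k 2 ≠ 0 ∧ nrm k ≤ L ∧ Res n k} ⊆
        {k | nrm k ≤ L ∧ Res n k} := fun _ hk => hk.2.2
    have hcount : (({k : Fin 3 → ℤ | nrm k ≤ L ∧ Res n k}.ncard : ℕ) : ℝ) ≤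
        8 * ((Finset.Icc (-⌊L⌋) ⌊L⌋).card : ℝ) ^ 2 := by
      exact_mod_cast ncard_setOf_nrm_le_res_le hn L
    have hbox := card_Icc_neg_floor_le hL
    calc _ ≤ (({k : Fin 3 → ℤ | nrm k ≤ L ∧ Res n k}.ncard : ℕ) : ℝ) := by
          exact_mod_cast Set.ncard_le_ncard hsub ((finite_setOf_nrm_le L).subset fun _ hk => hk.1)
      _ ≤ 8 * (3 * L) ^ 2 := hcount.trans (by gcongr)
      _ = 72 * L ^ 2 := by ring
end

section
/- Suppose n, k ∈ ℤ³ with n₃ = 0 and k₃ ≠ 0, and the resonance relation σ₁·k₃/|k| + σ₂·(n₃−k₃)/|n−k| = σ₃·n₃/|n| holds for some σ ∈ {±1}³. Then |k| = |n−k|; equivalently, k lies on the hyperplane of points equidistant from 0 and n, i.e., 2 k·n = |n|². -/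
lemma nrm_pos_of (v : Fin 3 → ℤ) (h : v 2 ≠ 0) : 0 < nrm v := by
  apply Real.sqrt_pos.mpr
  have h2 : (v 2 : ℝ) ≠ 0 := Int.cast_ne_zero.mpr h
  have : (0:ℝ) < (v 2 : ℝ)^2 := by positivity
  nlinarith [sq_nonneg ((v 0 : ℝ)), sq_nonneg ((v 1 : ℝ))]

/-- If n₃ = 0, k₃ ≠ 0 and the resonance relation holds for some signs σ ∈ {±1}³, then
|k| = |n−k|; equivalently k lies on the hyperplane equidistant from 0 and n,
i.e. 2 k·n = |n|². -/
theorem resonance_forces_equal_norms (n k : Fin 3 → ℤ)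
    (hn3 : n 2 = 0) (hk3 : k 2 ≠ 0)
    (hres : ∃ σ₁ σ₂ σ₃ : ℝ, (σ₁ = 1 ∨ σ₁ = -1) ∧ (σ₂ = 1 ∨ σ₂ = -1) ∧ (σ₃ = 1 ∨ σ₃ = -1) ∧
      σ₁ * (k 2 : ℝ) / nrm k + σ₂ * ((n 2 - k 2 : ℤ) : ℝ) / nrm (n - k)
        = σ₃ * (n 2 : ℝ) / nrm n) :
    nrm k = nrm (n - k) ∧
    2 * (k 0 * n 0 + k 1 * n 1 + k 2 * n 2) = (n 0) ^ 2 + (n 1) ^ 2 + (n 2) ^ 2 := by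
  obtain ⟨σ₁, σ₂, σ₃, h1, h2, h3, heq⟩ := hres
  have hk : 0 < nrm k := nrm_pos_of k hk3
  have hnk3 : (n - k) 2 ≠ 0 := by
    simp [Pi.sub_apply, hn3]; exact hk3
  have hnk : 0 < nrm (n - k) := nrm_pos_of (n - k) hnk3
  have hk2 : (k 2 : ℝ) ≠ 0 := Int.cast_ne_zero.mpr hk3
  rw [hn3] at heq
  push_cast at heq
  have key : σ₁ * nrm (n - k) = σ₂ * nrm k := by
    have h' : σ₁ * (k 2 : ℝ) * nrm (n - k) + σ₂ * (0 - (k 2 : ℝ)) * nrm k = 0 := by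
      have hne : nrm k ≠ 0 := ne_of_gt hk
      have hne2 : nrm (n - k) ≠ 0 := ne_of_gt hnk
      field_simp at heq
      linear_combination heq
    have : (k 2 : ℝ) * (σ₁ * nrm (n - k) - σ₂ * nrm k) = 0 := by ring_nf; ring_nf at h'; linarith
    have := mul_eq_zero.mp this
    rcases this with h | h
    · exact absurd h hk2
    · linarith
  have hnorm : nrm k = nrm (n - k) := by
    rcases h1 with rfl | rfl <;> rcases h2 with rfl | rfl <;> nlinarith
  refine ⟨hnorm, ?_⟩
  have hsq : ((k 0 : ℝ))^2 + ((k 1 : ℝ))^2 + ((k 2 : ℝ))^2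
      = (((n - k) 0 : ℝ))^2 + (((n - k) 1 : ℝ))^2 + (((n - k) 2 : ℝ))^2 := by
    have := congrArg (· ^ 2) hnorm
    simp only [nrm] at this
    rwa [Real.sq_sqrt (by positivity), Real.sq_sqrt (by positivity)] at this
  have hsqZ : (k 0)^2 + (k 1)^2 + (k 2)^2
      = (n 0 - k 0)^2 + (n 1 - k 1)^2 + (n 2 - k 2)^2 := by
    have : ((((k 0)^2 + (k 1)^2 + (k 2)^2 : ℤ)) : ℝ)
        = (((n 0 - k 0)^2 + (n 1 - k 1)^2 + (n 2 - k 2)^2 : ℤ) : ℝ) := by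
      push_cast
      simpa [Pi.sub_apply] using hsq
    exact_mod_cast this
  nlinarith [hsqZ]
end
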